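/- arXiv:1210.7514 — 3 statements merged into one kernel-verified Lean document; each statement's English description precedes it below -/
import Mathlib

section
/- A finitary endofunctor on Set defined by the formula R(X) = Σ_{n∈ω} Inj((n],X) ⊗_{S_n} R_n, for a functor R : S → Set (where S is the category of finite cardinals and surjections and the quotient is by the diagonal S_n-action), preserves pullbacks along monomorphisms. -/
/-!
Every element of `F A` is a class `[x, r]` with `x : (n] ↪ A`. Mapping along an injection `h` keeps
`h ∘ x` injective, so `F` preserves injections; in particular `F` of the first projection of a
pullback along a mono is injective. For the existence of lifts, let `[x, r] ∈ F X` and `[y, t] ∈ F Y`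
have the same image in `F Z`. Factor `f ∘ x = z ∘ s` with `s` surjective and `z` injective; as `g` is
injective, the image of `[y, t]` is `[g ∘ y, t]`, so `z = g ∘ y ∘ σ` and `t = R(σ ∘ s) r` for some
permutation `σ`. Hence every pair `(x i, y (σ (s i)))` lies in the pullback `P`, and the resulting
injection `w : (n] ↪ P` gives the lift `[w, r] ∈ F P`.
-/

open CategoryTheory Limits Function

/-- A functor `S → Set` on the category of finite cardinals and surjections
(the coefficient data of a semi-analytic functor). -/
structure SurjFunctor : Type 1 where
  obj : ℕ → Type
  map : ∀ {m n : ℕ} (s : Fin m → Fin n), Surjective s → obj m → obj n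
  map_id : ∀ {n : ℕ} (r : obj n), map id surjective_id r = r
  map_comp : ∀ {m n k : ℕ} (s : Fin m → Fin n) (hs : Surjective s)
      (t : Fin n → Fin k) (ht : Surjective t) (r : obj m),
      map t ht (map s hs r) = map (t ∘ s) (ht.comp hs) r

/-- The relation `(x⃗ ∘ σ, r) ∼ (x⃗, R(σ)(r))` identifying pairs along the
diagonal action of the symmetric group `S_n`. -/
def SARel (R : SurjFunctor) (X : Type) (n : ℕ) :
    ((Fin n ↪ X) × R.obj n) → ((Fin n ↪ X) × R.obj n) → Prop :=
  fun p q => ∃ σ : Equiv.Perm (Fin n),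
    p.1 = σ.toEmbedding.trans q.1 ∧ q.2 = R.map σ σ.surjective p.2

/-- The value `Σ_{n∈ω} Inj((n],X) ⊗_{S_n} R_n` of the semi-analytic functor at `X`. -/
def SAObj (R : SurjFunctor) (X : Type) : Type :=
  Σ n : ℕ, Quot (SARel R X n)

theorem SARel.equivalence (R : SurjFunctor) (X : Type) (n : ℕ) : Equivalence (SARel R X n) where
  refl p := ⟨1, rfl, (R.map_id p.2).symm⟩
  symm := by
    rintro ⟨-, r⟩ ⟨y, t⟩ ⟨σ, rfl : _ = σ.toEmbedding.trans y, rfl⟩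
    refine ⟨σ⁻¹, by ext; simp, ?_⟩
    rw [R.map_comp]
    simp only [Equiv.Perm.coe_inv, Equiv.symm_comp_self]
    exact (R.map_id r).symm
  trans := by
    rintro ⟨-, r⟩ ⟨y, t⟩ ⟨z, -⟩ ⟨σ, rfl : _ = σ.toEmbedding.trans y, rfl : t = _⟩
      ⟨τ, rfl : y = τ.toEmbedding.trans z, rfl⟩
    exact ⟨τ * σ, by ext; simp, R.map_comp _ _ _ _ r⟩

theorem SARel.quot_mk_eq_iff {R : SurjFunctor} {X : Type} {n : ℕ}
    {p q : (Fin n ↪ X) × R.obj n} : Quot.mk (SARel R X n) p = Quot.mk _ q ↔ SARel R X n p q :=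
  Quot.eq.trans (SARel.equivalence R X n).eqvGen_iff

theorem SAObj.exists_eq_symm_mk {R : SurjFunctor} {X T : Type} (e : T ≃ SAObj R X) (a : T) :
    ∃ (n : ℕ) (x : Fin n ↪ X) (r : R.obj n), a = e.symm ⟨n, Quot.mk _ (x, r)⟩ := by
  rcases ha : e a with ⟨n, q⟩
  obtain ⟨⟨x, r⟩, rfl⟩ := q.exists_rep
  exact ⟨n, x, r, e.eq_symm_apply.mpr ha⟩

theorem SAObj.mk_eq_mk_iff {R : SurjFunctor} {X : Type} {n : ℕ}
    {x y : Fin n ↪ X} {r t : R.obj n} :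
    (⟨n, Quot.mk _ (x, r)⟩ : SAObj R X) = ⟨n, Quot.mk _ (y, t)⟩ ↔
      ∃ σ : Equiv.Perm (Fin n), (∀ i, x i = y (σ i)) ∧ t = R.map σ σ.surjective r := by
  rw [Sigma.mk.inj_iff, heq_iff_eq, SARel.quot_mk_eq_iff]
  simp only [true_and, SARel, DFunLike.ext_iff]
  rfl

theorem Fin.exists_embedding_comp_surjective {A : Type} {n : ℕ} (φ : Fin n → A) :
    ∃ (k : ℕ) (z : Fin k ↪ A) (s : Fin n → Fin k), Surjective s ∧ ∀ i, z (s i) = φ i := by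
  classical
  let ι : Set.range φ ≃ Fin _ := Fintype.equivFin _
  refine ⟨_, ⟨fun j => ι.symm j, Subtype.val_injective.comp ι.symm.injective⟩,
    fun i => ι ⟨φ i, i, rfl⟩, fun j => ?_, fun i => by simp⟩
  obtain ⟨i, hi⟩ := (ι.symm j).2
  exact ⟨i, by simp [hi]⟩

/-- `e` identifies `F` with the semi-analytic functor of `R`, also on maps: `f` sends the class
of `(x, r)` to that of `(z, R(s) r)` for any factorization `f ∘ x = z ∘ s` of `f ∘ x` into a
surjection `s` followed by an injection `z`. -/
def IsSemiAnalyticEquiv (R : SurjFunctor) (F : Type ⥤ Type)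
    (e : ∀ X : Type, F.obj X ≃ SAObj R X) : Prop :=
  ∀ (X Y : Type) (f : X → Y) (n : ℕ) (x : Fin n ↪ X) (r : R.obj n)
    (k : ℕ) (z : Fin k ↪ Y) (s : Fin n → Fin k) (hs : Surjective s),
    (∀ i : Fin n, z (s i) = f (x i)) →
    F.map (TypeCat.ofHom f) ((e X).symm ⟨n, Quot.mk _ (x, r)⟩) =
      (e Y).symm ⟨k, Quot.mk _ (z, R.map s hs r)⟩

namespace IsSemiAnalyticEquiv

variable {R : SurjFunctor} {F : Type ⥤ Type} {e : ∀ X : Type, F.obj X ≃ SAObj R X}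

theorem map_symm_mk_of_embedding (hF : IsSemiAnalyticEquiv R F e) {X Y : Type} (f : X → Y)
    {n : ℕ} (x : Fin n ↪ X) (r : R.obj n) (z : Fin n ↪ Y) (hz : ∀ i, z i = f (x i)) :
    F.map (TypeCat.ofHom f) ((e X).symm ⟨n, Quot.mk _ (x, r)⟩) =
      (e Y).symm ⟨n, Quot.mk _ (z, r)⟩ := by
  simpa only [R.map_id] using hF X Y f n x r n z id surjective_id hz

theorem map_injective (hF : IsSemiAnalyticEquiv R F e) {X Y : Type} {f : X → Y}
    (hf : Injective f) : Injective (F.map (TypeCat.ofHom f)) := by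
  intro a b hab
  obtain ⟨n, x, r, rfl⟩ := SAObj.exists_eq_symm_mk (e X) a
  obtain ⟨m, y, t, rfl⟩ := SAObj.exists_eq_symm_mk (e X) b
  rw [hF.map_symm_mk_of_embedding f x r ⟨f ∘ x, hf.comp x.injective⟩ fun _ => rfl,
    hF.map_symm_mk_of_embedding f y t ⟨f ∘ y, hf.comp y.injective⟩ fun _ => rfl] at hab
  have hab := (e Y).symm.injective hab
  obtain rfl : n = m := congrArg Sigma.fst hab
  obtain ⟨σ, hxy, rfl⟩ := SAObj.mk_eq_mk_iff.mp hab
  exact congrArg _ (SAObj.mk_eq_mk_iff.mpr ⟨σ, fun i => hf (hxy i), rfl⟩)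

theorem exists_map_eq_of_map_eq (hF : IsSemiAnalyticEquiv R F e) {P X Y Z : Type}
    {fst : P → X} {snd : P → Y} {f : X → Z} {g : Y → Z}
    (hlift : ∀ x y, f x = g y → ∃ p, fst p = x ∧ snd p = y) (hg : Injective g)
    (a : F.obj X) (b : F.obj Y) (hab : F.map (TypeCat.ofHom f) a = F.map (TypeCat.ofHom g) b) :
    ∃ c, F.map (TypeCat.ofHom fst) c = a ∧ F.map (TypeCat.ofHom snd) c = b := by
  obtain ⟨n, x, r, rfl⟩ := SAObj.exists_eq_symm_mk (e X) a
  obtain ⟨m, y, t, rfl⟩ := SAObj.exists_eq_symm_mk (e Y) b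
  obtain ⟨k, z, s, hs, hzs⟩ := Fin.exists_embedding_comp_surjective (f ∘ x)
  rw [hF X Z f n x r k z s hs hzs,
    hF.map_symm_mk_of_embedding g y t ⟨g ∘ y, hg.comp y.injective⟩ fun _ => rfl] at hab
  have hab := (e Z).symm.injective hab
  obtain rfl : k = m := congrArg Sigma.fst hab
  obtain ⟨σ, hzy, rfl⟩ := SAObj.mk_eq_mk_iff.mp hab
  choose w hw₁ hw₂ using fun i => hlift (x i) (y (σ (s i))) ((hzs i).symm.trans (hzy (s i)))
  have hw : Injective w := fun i j hij => x.injective (by rw [← hw₁ i, ← hw₁ j, hij])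
  refine ⟨(e P).symm ⟨n, Quot.mk _ (⟨w, hw⟩, r)⟩, ?_, ?_⟩
  · exact hF.map_symm_mk_of_embedding fst ⟨w, hw⟩ r x fun i => (hw₁ i).symm
  · rw [R.map_comp]
    exact hF P Y snd n ⟨w, hw⟩ r k y (σ ∘ s) (σ.surjective.comp hs) fun i => (hw₂ i).symm

theorem isPullback_map (hF : IsSemiAnalyticEquiv R F e) {P X Y Z : Type}
    {fst : P ⟶ X} {snd : P ⟶ Y} {f : X ⟶ Z} {g : Y ⟶ Z} (h : IsPullback fst snd f g) [Mono g] :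
    IsPullback (F.map fst) (F.map snd) (F.map f) (F.map g) := by
  have hfst : Injective fst := (mono_iff_injective fst).1 h.mono_fst_of_mono
  have hg : Injective g := (mono_iff_injective g).1 inferInstance
  obtain ⟨w, -, hlift⟩ := (Types.isPullback_iff _ _ _ _).1 h
  exact (Types.isPullback_iff _ _ _ _).2 ⟨by rw [← F.map_comp, w, F.map_comp],
    fun a b hab => hF.map_injective hfst hab.1, hF.exists_map_eq_of_map_eq hlift hg⟩

end IsSemiAnalyticEquiv

/-- An endofunctor on `Set` given by the semi-analytic formula
`F(X) ≅ Σ_n Inj((n],X) ⊗_n R_n` (the bijections `e` are natural: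
`F.map` acts on equivalence classes via surjection-injection factorization
of the composite, as encoded by the hypothesis `hmap`) preserves pullbacks
along monomorphisms. -/
theorem semiAnalytic_preserves_pullbacks_along_monos
    (R : SurjFunctor) (F : Type ⥤ Type)
    (e : ∀ X : Type, F.obj X ≃ SAObj R X)
    (hmap : ∀ (X Y : Type) (f : X → Y) (n : ℕ) (x : Fin n ↪ X) (r : R.obj n)
      (k : ℕ) (z : Fin k ↪ Y) (s : Fin n → Fin k) (hs : Surjective s),
      (∀ i : Fin n, z (s i) = f (x i)) →
      F.map (TypeCat.ofHom f) ((e X).symm ⟨n, Quot.mk _ (x, r)⟩) =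
        (e Y).symm ⟨k, Quot.mk _ (z, R.map s hs r)⟩) :
    ∀ {X Y Z : Type} (f : X ⟶ Z) (g : Y ⟶ Z), Mono g →
      PreservesLimit (cospan f g) F := by
  intro X Y Z f g _
  have h := IsPullback.of_hasPullback f g
  exact h.preservesLimit_cospan_iff.2 (IsSemiAnalyticEquiv.isPullback_map hmap h)
end

section
/- An endofunctor on Set of the form A(X) = Σ_{n∈ω} X^n ⊗_{S_n} A_n, for a functor A : B → Set (B the category of finite cardinals and bijections), weakly preserves wide pullbacks. -/
/-!
STATEMENT 2: An endofunctor on Set of the form `A(X) = Σ_{n∈ω} X^n ⊗_{S_n} A_n`,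
for a functor `A : B → Set` (`B` = finite cardinals and bijections),
weakly preserves wide pullbacks.
-/

open CategoryTheory Function

/-- A functor `B → Set` on the category of finite cardinals and bijections
(the coefficient data of an analytic functor). -/
structure BijFunctor : Type 1 where
  obj : ℕ → Type
  map : ∀ {n : ℕ}, Equiv.Perm (Fin n) → obj n → obj n
  map_id : ∀ {n : ℕ} (a : obj n), map (Equiv.refl (Fin n)) a = a
  map_comp : ∀ {n : ℕ} (σ τ : Equiv.Perm (Fin n)) (a : obj n),
      map τ (map σ a) = map (σ.trans τ) a

/-- The relation `(x⃗ ∘ σ, a) ∼ (x⃗, A(σ)(a))` identifying pairs along the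
diagonal `S_n`-action. -/
def ANRel (A : BijFunctor) (X : Type) (n : ℕ) :
    ((Fin n → X) × A.obj n) → ((Fin n → X) × A.obj n) → Prop :=
  fun p q => ∃ σ : Equiv.Perm (Fin n),
    p.1 = q.1 ∘ σ ∧ q.2 = A.map σ p.2

/-- The value `Σ_{n∈ω} X^n ⊗_{S_n} A_n` of the analytic functor at `X`. -/
def ANObj (A : BijFunctor) (X : Type) : Type :=
  Σ n : ℕ, Quot (ANRel A X n)

/-- The concrete wide pullback of a family `m j : X j → Z` in `Set`:
tuples `(z, (x_j)_j)` with `m j (x_j) = z` for all `j`. -/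
def WidePB {J : Type} (Z : Type) (X : J → Type) (m : ∀ j, X j → Z) : Type :=
  { p : Z × (∀ j, X j) // ∀ j, m j (p.2 j) = p.1 }

/-!
If `F(m_j)` sends `[x_j, a_j]` to `[z, a]`, the permutation relating the two presentations
can be absorbed into the tuple, so every `y_j` has a presentation `[x_j, a]` with the common
coefficient `a` and `m_j ∘ x_j = z`. The tuples `(z, (x_j)_j)` then lie pointwise in the
wide pullback, and `[(z, (x_j)_j), a]` is the required element.
-/

theorem ANRel.equivalence (A : BijFunctor) (X : Type) (n : ℕ) :
    Equivalence (ANRel A X n) where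
  refl _ := ⟨Equiv.refl _, rfl, (A.map_id _).symm⟩
  symm := by
    rintro p q ⟨σ, hx, ha⟩
    refine ⟨σ.symm, ?_, ?_⟩
    · rw [hx, comp_assoc, Equiv.self_comp_symm, comp_id]
    · rw [ha, A.map_comp, Equiv.self_trans_symm, A.map_id]
  trans := by
    rintro p q r ⟨σ, hx, ha⟩ ⟨τ, hx', ha'⟩
    exact ⟨σ.trans τ, by rw [hx, hx']; rfl, by rw [ha', ha, A.map_comp]⟩

namespace ANObj

variable {A : BijFunctor} {X Y : Type}

def mk (n : ℕ) (x : Fin n → X) (a : A.obj n) : ANObj A X :=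
  ⟨n, Quot.mk _ (x, a)⟩

theorem exists_eq_mk (t : ANObj A X) : ∃ n x a, t = mk n x a := by
  obtain ⟨n, q⟩ := t
  obtain ⟨⟨x, a⟩, rfl⟩ := Quot.exists_rep q
  exact ⟨n, x, a, rfl⟩

theorem mk_eq_mk_iff {n : ℕ} {x x' : Fin n → X} {a a' : A.obj n} :
    mk n x a = mk n x' a' ↔ ∃ σ : Equiv.Perm (Fin n), x = x' ∘ σ ∧ a' = A.map σ a := by
  change (⟨n, _⟩ : Σ n, Quot (ANRel A X n)) = ⟨n, _⟩ ↔ _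
  rw [Sigma.mk.inj_iff, heq_eq_eq, and_iff_right rfl, Quot.eq,
    (ANRel.equivalence A X n).eqvGen_iff]
  rfl

def map (f : X → Y) : ANObj A X → ANObj A Y :=
  Sigma.map id fun _ => Quot.map (fun p => (f ∘ p.1, p.2)) fun _ _ ⟨σ, hx, ha⟩ =>
    ⟨σ, by rw [hx]; rfl, ha⟩

@[simp]
theorem map_mk (f : X → Y) (n : ℕ) (x : Fin n → X) (a : A.obj n) :
    map f (mk n x a) = mk n (f ∘ x) a :=
  rfl

theorem exists_mk_eq_of_map_eq_mk {f : X → Y} {t : ANObj A X} {n : ℕ} {z : Fin n → Y}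
    {a : A.obj n} (h : map f t = mk n z a) : ∃ x : Fin n → X, f ∘ x = z ∧ t = mk n x a := by
  obtain ⟨k, x, b, rfl⟩ := exists_eq_mk t
  obtain rfl : k = n := congrArg Sigma.fst h
  rw [map_mk] at h
  obtain ⟨σ, hz, ha⟩ := mk_eq_mk_iff.mp h
  refine ⟨x ∘ σ.symm, ?_, mk_eq_mk_iff.mpr ⟨σ, ?_, ha⟩⟩
  · rw [← comp_assoc, hz, comp_assoc, Equiv.self_comp_symm, comp_id]
  · rw [comp_assoc, Equiv.symm_comp_self, comp_id]

theorem weakly_preserves_wide_pullbacks {J Z : Type} {X : J → Type} (m : ∀ j, X j → Z)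
    (s : ANObj A Z) (t : ∀ j, ANObj A (X j)) (ht : ∀ j, map (m j) (t j) = s) :
    ∃ w : ANObj A (WidePB Z X m),
      map (fun p => p.1.1) w = s ∧ ∀ j, map (fun p => p.1.2 j) w = t j := by
  obtain ⟨n, z, a, rfl⟩ := exists_eq_mk s
  choose x hx ht using fun j => exists_mk_eq_of_map_eq_mk (ht j)
  refine ⟨mk n (fun i => ⟨(z i, fun j => x j i), fun j => congrFun (hx j) i⟩) a, rfl, ?_⟩
  intro j
  rw [ht j]
  rfl

end ANObj

/-- An endofunctor on `Set` of the form `F(X) ≅ Σ_n X^n ⊗_n A_n` weakly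
preserves wide pullbacks: any compatible family of elements over the images
of the legs of a wide pullback is (not necessarily uniquely) covered by an
element of the value at the wide pullback, i.e. the canonical comparison
map into the limit is surjective. -/
theorem analytic_weakly_preserves_wide_pullbacks
    (A : BijFunctor) (F : Type ⥤ Type)
    (e : ∀ X : Type, F.obj X ≃ ANObj A X)
    (hmap : ∀ (X Y : Type) (f : X → Y) (n : ℕ) (x : Fin n → X) (a : A.obj n),
      F.map (TypeCat.ofHom f) ((e X).symm ⟨n, Quot.mk _ (x, a)⟩) =
        (e Y).symm ⟨n, Quot.mk _ (f ∘ x, a)⟩) :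
    ∀ (J : Type) (Z : Type) (X : J → Type) (m : ∀ j, X j → Z)
      (b : F.obj Z) (y : ∀ j, F.obj (X j)),
      (∀ j, F.map (TypeCat.ofHom (m j)) (y j) = b) →
      ∃ w : F.obj (WidePB Z X m),
        F.map (TypeCat.ofHom fun p => p.1.1) w = b ∧
        ∀ j, F.map (TypeCat.ofHom fun p => p.1.2 j) w = y j := by
  have hnat : ∀ {X Y : Type} (f : X → Y) (u : F.obj X),
      F.map (TypeCat.ofHom f) u = (e Y).symm (ANObj.map f (e X u)) := by
    intro X Y f u
    obtain ⟨n, x, a, hu⟩ := ANObj.exists_eq_mk (e X u)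
    rw [(e X).eq_symm_apply.mpr hu, Equiv.apply_symm_apply]
    exact hmap X Y f n x a
  intro J Z X m b y hy
  obtain ⟨w, hw, hwy⟩ := ANObj.weakly_preserves_wide_pullbacks m (e Z b) (fun j => e (X j) (y j))
    fun j => by rw [← hy j, hnat, Equiv.apply_symm_apply]
  refine ⟨(e _).symm w, ?_, fun j => ?_⟩
  · rw [hnat, Equiv.apply_symm_apply, hw, Equiv.symm_apply_apply]
  · rw [hnat, Equiv.apply_symm_apply, hwy, Equiv.symm_apply_apply]
end

section
/- For a κ-accessible endofunctor F on Set (κ a regular cardinal) that preserves wide pullbacks of monomorphisms, for every set X and every x ∈ F(X) there exists a least cardinal α < κ, an injection f : (α] → X, and y ∈ F((α]) with F(f)(y) = x, such that (f, y) is minimal: any other mono through which x factors contains the image of f. -/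
/-!
`X` is the `κ`-filtered colimit of its subsets of cardinality `< κ`, and `F` preserves this
colimit, so every `x ∈ F X` is supported by a small subset. The subsets supporting `x` are
closed under arbitrary intersections, because an intersection of subsets is the wide pullback
of their inclusions and `F` preserves it. Hence the intersection of all supports of `x` is its
least support, and it is small since it lies inside a small one.
-/

open CategoryTheory Limits

universe u

/-- A category `J` is `κ`-filtered if every subdiagram with fewer than `κ`
morphisms admits a cocone. -/
def CardinalFiltered (J : Type u) [Category.{u} J] (κ : Cardinal.{u}) : Prop :=
  ∀ (K : Type u) [SmallCategory K],
    Cardinal.mk (Σ k k' : K, k ⟶ k') < κ → ∀ D : K ⥤ J, Nonempty (Cocone D)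

theorem cardinalFiltered_of_isCardinalFiltered (J : Type u) [Category.{u} J] (κ : Cardinal.{u})
    [Fact κ.IsRegular] [IsCardinalFiltered J κ] : CardinalFiltered J κ := by
  intro K _ hK D
  refine IsCardinalFiltered.nonempty_cocone (κ := κ) D ?_
  rwa [hasCardinalLT_iff_of_equiv (Arrow.equivSigma K), hasCardinalLT_iff_cardinal_mk_lt]

def Supports (F : Type u ⥤ Type u) {X : Type u} (x : F.obj X) (T : Set X) : Prop :=
  ∃ z : F.obj T, F.map (TypeCat.ofHom (Subtype.val : T → X)) z = x

theorem exists_supports_mk_lt {X : Type u} {κ : Cardinal.{u}} (hκ : κ.IsRegular) (F : Type u ⥤ Type u)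
    [PreservesColimitsOfShape (HasCardinalLT.Set X κ) F] (x : F.obj X) :
    ∃ T : Set X, Cardinal.mk T < κ ∧ Supports F x T := by
  obtain ⟨⟨T, hT⟩, z, hz⟩ := Types.jointly_surjective_of_isColimit
    (isColimitOfPreserves F (HasCardinalLT.Set.isColimitCocone X κ hκ.aleph0_le)) x
  exact ⟨T, (hasCardinalLT_iff_cardinal_mk_lt _ _).1 hT, z, hz⟩

section iInter

variable {X J : Type u} (A : J → Set X)

abbrev inclusionWideCospan : WidePullbackShape J ⥤ Type u :=
  WidePullbackShape.wideCospan X (fun j => A j) fun _ => TypeCat.ofHom Subtype.val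

def iInterCone : Cone (inclusionWideCospan A) :=
  WidePullbackShape.mkCone (TypeCat.ofHom (Subtype.val : (⋂ j, A j : Set X) → X))
    (fun j => TypeCat.ofHom fun s => ⟨s.1, Set.mem_iInter.1 s.2 j⟩) fun _ => rfl

theorem nonempty_isLimit_iInterCone : Nonempty (IsLimit (iInterCone A)) := by
  rw [Types.isLimit_iff]
  intro s hs
  have hval : ∀ j, (s (some j) : A j).1 = s none := fun j => hs (WidePullbackShape.Hom.term j)
  refine ⟨⟨s none, Set.mem_iInter.2 fun j => hval j ▸ (s (some j)).2⟩, ?_, ?_⟩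
  · rintro (_ | j)
    · rfl
    · exact Subtype.ext (hval j).symm
  · intro y hy
    exact Subtype.ext (hy none)

theorem supports_iInter (F : Type u ⥤ Type u) [PreservesLimit (inclusionWideCospan A) F]
    {x : F.obj X} (hx : ∀ j, Supports F x (A j)) : Supports F x (⋂ j, A j) := by
  choose z hz using hx
  obtain ⟨hc⟩ := nonempty_isLimit_iInterCone A
  let s : ∀ o, F.obj ((inclusionWideCospan A).obj o) := fun o =>
    match o with
    | none => x
    | some j => z j
  have hs : s ∈ (inclusionWideCospan A ⋙ F).sections := by
    rintro _ _ (_ | j)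
    · exact (inclusionWideCospan A ⋙ F).map_id_apply _ _
    · exact hz j
  obtain ⟨y, hy, -⟩ := (Types.isLimit_iff _).1 ⟨isLimitOfPreserves F hc⟩ s hs
  exact ⟨y, hy none⟩

end iInter

/-- If `F` is a `κ`-accessible endofunctor on `Set` (it preserves colimits of
`κ`-filtered diagrams), `κ` a regular cardinal, and `F` preserves wide
pullbacks of monomorphisms, then every element `x ∈ F(X)` factors through a
least subobject `S ↪ X`, which has cardinality (the least such cardinal)
`α < κ`: there are `y ∈ F(S)` with `F(incl)(y) = x`, and any other
monomorphism through which `x` factors contains `S`. -/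
theorem accessible_wide_pullback_preserving_has_least_support
    (κ : Cardinal.{u}) (hκ : κ.IsRegular) (F : Type u ⥤ Type u)
    (hacc : ∀ (J : Type u) [SmallCategory J],
      CardinalFiltered J κ → PreservesColimitsOfShape J F)
    (hwide : ∀ (J : Type u) (D : WidePullbackShape J ⥤ Type u),
      (∀ j : J, Mono (D.map (WidePullbackShape.Hom.term j))) →
      PreservesLimit D F) :
    ∀ (X : Type u) (x : F.obj X),
      ∃ (S : Set X) (y : F.obj S),
        Cardinal.mk S < κ ∧
        F.map (TypeCat.ofHom (Subtype.val : S → X)) y = x ∧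
        (∀ (T : Set X) (z : F.obj T),
          F.map (TypeCat.ofHom (Subtype.val : T → X)) z = x → S ⊆ T) := by
  intro X x
  have : Fact κ.IsRegular := ⟨hκ⟩
  have := hacc _ (cardinalFiltered_of_isCardinalFiltered (HasCardinalLT.Set X κ) κ)
  obtain ⟨T₀, hT₀, hxT₀⟩ := exists_supports_mk_lt hκ F x
  let A : {T : Set X // Supports F x T} → Set X := Subtype.val
  have := hwide _ (inclusionWideCospan A) fun j =>
    (mono_iff_injective _).2 Subtype.val_injective
  obtain ⟨y, hy⟩ := supports_iInter A F (x := x) Subtype.prop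
  refine ⟨⋂ j, A j, y, ?_, hy, fun T z hz => Set.iInter_subset A ⟨T, z, hz⟩⟩
  exact (Cardinal.mk_le_mk_of_subset (Set.iInter_subset A ⟨T₀, hxT₀⟩)).trans_lt hT₀
end
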